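/- Let H ∈ (0,1], γ ∈ (0,1), T ∈ (0,∞), and define for 0 ≤ s ≤ t ≤ T the function V_Z(s,t) = ((1−γ) t^{2H} + (γ²−γ) s^{2H} + γ (t−s)^{2H})^{1/2}. Then there exist positive constants δ and C such that for all (s,t) with 0 ≤ s ≤ δ, T−δ ≤ t ≤ T and s ≤ t, |t − T − γ s| ≤ C ( V_Z(0,T) − V_Z(s,t) ). -/
import Mathlib
set_option maxHeartbeats 1000000

/-- The standard deviation function `V_Z(s,t)` of the Gaussian field
`Z(s,t) = X_H(t) − γ X_H(s)`. -/
noncomputable def VZ (H γ s t : ℝ) : ℝ :=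
  ((1 - γ) * t ^ (2*H) + (γ^2 - γ) * s ^ (2*H) + γ * (t - s) ^ (2*H)) ^ ((1:ℝ)/2)

/-- Mean-value lower bound for differences of powers on `[T/2, T]`. -/
lemma rpow_diff_lower (p T a b : ℝ) (hp : 0 < p) (hT : 0 < T)
    (ha : T/2 ≤ a) (hab : a ≤ b) (hb : b ≤ T) :
    p * (T/2) ^ p / T * (b - a) ≤ b ^ p - a ^ p := by
  rcases eq_or_lt_of_le hab with rfl | hab'
  · simp
  have hT2 : (0:ℝ) < T/2 := by linarith
  have hcont : ContinuousOn (fun x : ℝ => x ^ p) (Set.Icc a b) := by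
    intro x hx
    have hx' : T/2 ≤ x := le_trans ha hx.1
    have hx0 : x ≠ 0 := by intro h; rw [h] at hx'; linarith
    exact (Real.continuousAt_rpow_const x p (Or.inl hx0)).continuousWithinAt
  have hderiv : ∀ x ∈ Set.Ioo a b, HasDerivAt (fun x : ℝ => x ^ p)
      (p * x ^ (p - 1)) x := by
    intro x hx
    have hx' : T/2 ≤ x := le_trans ha hx.1.le
    have hx0 : x ≠ 0 := by intro h; rw [h] at hx'; linarith
    exact Real.hasDerivAt_rpow_const (Or.inl hx0)
  obtain ⟨c, hc, hceq⟩ := exists_hasDerivAt_eq_slope (fun x : ℝ => x ^ p)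
    (fun x => p * x ^ (p - 1)) hab' hcont hderiv
  have hc1 : T/2 ≤ c := le_trans ha hc.1.le
  have hc2 : c ≤ T := le_trans hc.2.le hb
  have hc0 : 0 < c := lt_of_lt_of_le hT2 hc1
  have hkey : (T/2) ^ p / T ≤ c ^ (p - 1) := by
    have h1 : (T/2) ^ p ≤ c ^ p := Real.rpow_le_rpow hT2.le hc1 hp.le
    have h2 : c ^ (p - 1) = c ^ p / c := by
      rw [Real.rpow_sub hc0, Real.rpow_one]
    rw [h2]
    exact div_le_div₀ (Real.rpow_nonneg hc0.le p) h1 hc0 hc2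
  have hba0 : b - a ≠ 0 := by intro h; linarith [sub_eq_zero.mp h]
  rw [eq_div_iff hba0] at hceq
  have hslope : b ^ p - a ^ p = p * c ^ (p - 1) * (b - a) := by
    simpa using hceq.symm
  rw [hslope]
  have hba : (0:ℝ) ≤ b - a := by linarith
  have hmono : p * ((T/2) ^ p / T) ≤ p * c ^ (p - 1) :=
    mul_le_mul_of_nonneg_left hkey hp.le
  calc p * (T/2) ^ p / T * (b - a) = p * ((T/2) ^ p / T) * (b - a) := by ring
    _ ≤ p * c ^ (p - 1) * (b - a) := mul_le_mul_of_nonneg_right hmono hba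

/-- Inequality (3.9): near `(0,T)` one has `|t − T − γ s| ≤ C (V_Z(0,T) − V_Z(s,t))`. -/
theorem VZ_local_bound (H γ T : ℝ)
    (hH : H ∈ Set.Ioc (0:ℝ) 1) (hγ : γ ∈ Set.Ioo (0:ℝ) 1) (hT : 0 < T) :
    ∃ δ : ℝ, 0 < δ ∧ ∃ C : ℝ, 0 < C ∧
      ∀ s t : ℝ, 0 ≤ s → s ≤ δ → T - δ ≤ t → t ≤ T → s ≤ t →
        |t - T - γ * s| ≤ C * (VZ H γ 0 T - VZ H γ s t) := by
  obtain ⟨hH0, hH1⟩ := hH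
  obtain ⟨hγ0, hγ1⟩ := hγ
  set p := 2 * H with hp_def
  have hp : 0 < p := by positivity
  set K := p * (T/2) ^ p / T with hK_def
  have hK : 0 < K := by positivity
  clear_value K
  have h1γ : 0 < 1 - γ := by linarith
  have hTH : (0:ℝ) < T ^ H := Real.rpow_pos_of_pos hT H
  refine ⟨T/4, by positivity, 2 * T ^ H / ((1 - γ) * K),
    div_pos (by positivity) (mul_pos h1γ hK), ?_⟩
  intro s t hs0 hsδ htl htT hst
  have hts : T/2 ≤ t - s := by linarith
  have htT2 : T/2 ≤ t := by linarith
  have hts0 : (0:ℝ) ≤ t - s := by linarith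
  -- value at (0,T)
  have hV0 : VZ H γ 0 T = T ^ H := by
    rw [VZ, Real.zero_rpow (ne_of_gt (by linarith : (0:ℝ) < 2*H))]
    have h1 : (1 - γ) * T ^ (2*H) + (γ^2 - γ) * 0 + γ * (T - 0) ^ (2*H) = T ^ (2*H) := by
      ring_nf
    rw [h1, ← Real.rpow_mul hT.le, show 2 * H * (1/2 : ℝ) = H by ring]
  -- set up F and F0
  set F : ℝ := (1 - γ) * t ^ p + (γ^2 - γ) * s ^ p + γ * (t - s) ^ p with hF_def
  have hVst : VZ H γ s t = F ^ ((1:ℝ)/2) := rfl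
  clear_value p F
  have hsp : s ^ p ≤ t ^ p := Real.rpow_le_rpow hs0 hst hp.le
  have hspn : (0:ℝ) ≤ s ^ p := Real.rpow_nonneg hs0 p
  have htsp : (0:ℝ) ≤ (t - s) ^ p := Real.rpow_nonneg hts0 p
  have htpn : (0:ℝ) ≤ t ^ p := Real.rpow_nonneg (by linarith) p
  have hF0 : 0 ≤ F := by
    have : γ * s ^ p ≤ s ^ p := by nlinarith
    nlinarith
  -- lower bounds via mean value lemma
  have hmv1 : K * (T - t) ≤ T ^ p - t ^ p := by
    rw [hK_def]; exact rpow_diff_lower p T t T hp hT htT2 htT le_rfl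
  have hmv2 : K * s ≤ t ^ p - (t - s) ^ p := by
    have h := rpow_diff_lower p T (t - s) t hp hT hts (by linarith) htT
    rw [hK_def]
    calc p * (T/2) ^ p / T * s = p * (T/2) ^ p / T * (t - (t - s)) := by ring
      _ ≤ t ^ p - (t - s) ^ p := h
  have hDlb : (1 - γ) * K * ((T - t) + γ * s) ≤ T ^ p - F := by
    have hTt : t ^ p ≤ T ^ p := Real.rpow_le_rpow (by linarith) htT hp.le
    have e : T ^ p - F = (1 - γ) * (T ^ p - t ^ p) + γ * (T ^ p - t ^ p)
        + γ * (t ^ p - (t - s) ^ p) + γ * (1 - γ) * s ^ p := by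
      rw [hF_def]; ring
    rw [e]
    have h1 : (1 - γ) * (K * (T - t)) ≤ (1 - γ) * (T ^ p - t ^ p) :=
      mul_le_mul_of_nonneg_left hmv1 h1γ.le
    have h2 : γ * (K * s) ≤ γ * (t ^ p - (t - s) ^ p) :=
      mul_le_mul_of_nonneg_left hmv2 hγ0.le
    nlinarith [mul_nonneg (mul_nonneg hγ0.le h1γ.le) hspn,
      mul_nonneg hγ0.le (sub_nonneg.mpr hTt),
      mul_pos h1γ hK, mul_nonneg (mul_nonneg h1γ.le hK.le) (mul_nonneg hγ0.le hs0)]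
  have hD0 : 0 ≤ T ^ p - F := by
    have : 0 ≤ (1 - γ) * K * ((T - t) + γ * s) := by
      apply mul_nonneg (mul_nonneg h1γ.le hK.le); nlinarith
    linarith
  -- square roots
  set A := T ^ H with hA_def
  set B := F ^ ((1:ℝ)/2) with hB_def
  have hB0 : 0 ≤ B := Real.rpow_nonneg hF0 _
  clear_value A B
  have hBsq : B ^ (2:ℕ) = F := by
    rw [hB_def, ← Real.rpow_natCast (F ^ ((1:ℝ)/2)) 2, ← Real.rpow_mul hF0]
    norm_num
  have hAsq : A ^ (2:ℕ) = T ^ p := by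
    rw [hA_def, ← Real.rpow_natCast (T ^ H) 2, ← Real.rpow_mul hT.le, hp_def]
    ring_nf
  have hBA : B ≤ A := by
    have hFle : F ≤ T ^ p := by have := sub_nonneg.mp hD0; exact this
    rw [hA_def, hB_def]
    calc F ^ ((1:ℝ)/2) ≤ (T ^ p) ^ ((1:ℝ)/2) :=
          Real.rpow_le_rpow hF0 hFle (by norm_num)
      _ = T ^ H := by
          rw [← Real.rpow_mul hT.le, show p * (1/2 : ℝ) = H by rw [hp_def]; ring]
  -- conclude
  rw [hV0, hVst]
  have habs : |t - T - γ * s| = (T - t) + γ * s := by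
    rw [abs_of_nonpos (by linarith [mul_nonneg hγ0.le hs0])]; ring
  rw [habs]
  rw [div_mul_eq_mul_div, le_div_iff₀ (mul_pos h1γ hK)]
  -- goal : ((T-t) + γ*s) * ((1-γ)*K) ≤ 2*T^H*(A - B)
  have hfac : T ^ p - F = (A - B) * (A + B) := by
    have : A ^ (2:ℕ) - B ^ (2:ℕ) = (A - B) * (A + B) := by ring
    rw [← hAsq, ← hBsq]; linarith [this]
  have hAB2 : (A - B) * (A + B) ≤ (A - B) * (2 * A) := by
    apply mul_le_mul_of_nonneg_left (by linarith) (by linarith)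
  nlinarith [hDlb, hfac, hAB2]
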